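/- arXiv:math/0703666 — 2 statements merged into one kernel-verified Lean document; each statement's English description precedes it below -/
import Mathlib

section
/- Let s_1, s_2, s'_1, s'_2, t_0, t_1, t_2 be simple braids satisfying t_2 s_1 = s'_1 t_1, t_1 s_2 = s'_2 t_0, and gcd_L(s'_2, t_1) = 1. If (s_1, s_2) is normal, then (s'_1, s'_2) is normal as well. -/
/-!
Garside theory for the positive braid monoid `B_n⁺`, built as the monoid presented by the braid
relations. By the cube condition, a common multiple of `σ_i` and `σ_j` is a multiple of their lcm
(Theorem H). This gives cancellativity, and least complements: if `d ∣ t z` for some `z`, there is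
a least `c` with `d ∣ t c`. As `Δ` is quasi-central and every positive braid divides a power of `Δ`,
`B_n⁺` satisfies Ore's condition, so it embeds in `B_n` with image `PosBraid n`.

For the tile, let `d` divide `s₁' s₂'` and `Δ`, so `d ∣ s₁' s₂' t₀ = t₂ s₁ s₂`. The least complement
`c` of `d` along `t₂` divides `s₁ s₂` and the complement of `t₂` in `Δ`, hence `Δ`; normality of
`(s₁, s₂)` gives `c ∣ s₁`, so `d ∣ t₂ s₁ = s₁' t₁`. Then the least complement of `d` along `s₁'`
divides both `t₁` and `s₂'`, so it is `1`, that is `d ∣ s₁'`.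
-/

/-- Relations of the braid group presentation. -/
def braidRels (n : ℕ) : Set (FreeGroup (Fin (n - 1))) :=
  {r | (∃ i j : Fin (n - 1), (i : ℕ) + 2 ≤ (j : ℕ) ∧
          r = FreeGroup.of i * FreeGroup.of j * (FreeGroup.of j * FreeGroup.of i)⁻¹) ∨
       (∃ i j : Fin (n - 1), (i : ℕ) + 1 = (j : ℕ) ∧
          r = FreeGroup.of i * FreeGroup.of j * FreeGroup.of i *
              (FreeGroup.of j * FreeGroup.of i * FreeGroup.of j)⁻¹)}

/-- Artin's braid group `B_n`. -/
def BraidGroup (n : ℕ) : Type := PresentedGroup (braidRels n)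

instance (n : ℕ) : Group (BraidGroup n) :=
  inferInstanceAs (Group (PresentedGroup (braidRels n)))

/-- The Artin generator `σ_{i+1}` (0-indexed `i`). -/
def braidGen {n : ℕ} (i : Fin (n - 1)) : BraidGroup n := PresentedGroup.of i

/-- The positive braid monoid `B_n^+` (submonoid generated by the `σ_i`). -/
def PosBraid (n : ℕ) : Submonoid (BraidGroup n) :=
  Submonoid.closure (Set.range (braidGen (n := n)))

/-- `x` left-divides `y` (with positive quotient). -/
def DividesL {n : ℕ} (x y : BraidGroup n) : Prop := ∃ z ∈ PosBraid n, y = x * z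

/-- `x` right-divides `y` (with positive quotient). -/
def DividesR {n : ℕ} (x y : BraidGroup n) : Prop := ∃ z ∈ PosBraid n, y = z * x

/-- Auxiliary: `deltaAux n m` is the Garside element `Δ_m` viewed inside `B_n`. -/
def deltaAux (n : ℕ) : ℕ → BraidGroup n
  | 0 => 1
  | m + 1 =>
      ((List.range m).map (fun i =>
        if h : i < n - 1 then braidGen ⟨i, h⟩ else 1)).prod * deltaAux n m

/-- Garside's element `Δ_n = σ_1⋯σ_{n-1} Δ_{n-1}`. -/
def braidDelta (n : ℕ) : BraidGroup n := deltaAux n n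

/-- A simple braid: a (positive) divisor of `Δ_n`. -/
def Simple {n : ℕ} (s : BraidGroup n) : Prop :=
  s ∈ PosBraid n ∧ DividesL s (braidDelta n)

/-- Normality of a pair, in the divisor form: every `σ_i` left-dividing `t`
right-divides `s`. -/
def NormalPair {n : ℕ} (s t : BraidGroup n) : Prop :=
  ∀ i : Fin (n - 1), DividesL (braidGen i) t → DividesR (braidGen i) s

/-- `g` is the left gcd of `x` and `y` in `B_n^+`. -/
def IsLeftGcd {n : ℕ} (g x y : BraidGroup n) : Prop :=
  g ∈ PosBraid n ∧ DividesL g x ∧ DividesL g y ∧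
    ∀ d ∈ PosBraid n, DividesL d x → DividesL d y → DividesL d g

/-- Normality of a pair, in the gcd form: `s = gcd_L(st, Δ_n)`. -/
def GNormal {n : ℕ} (s t : BraidGroup n) : Prop :=
  IsLeftGcd s (s * t) (braidDelta n)

/-- `u` is the left lcm of `x` and `y`. -/
def IsLeftLcm {n : ℕ} (u x y : BraidGroup n) : Prop :=
  DividesR x u ∧ DividesR y u ∧ ∀ v, DividesR x v → DividesR y v → DividesR u v

/-- The position `i` inside `Fin n`. -/
def finL {n : ℕ} (i : Fin (n - 1)) : Fin n := ⟨i, by have := i.isLt; omega⟩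

/-- The position `i + 1` inside `Fin n`. -/
def finR {n : ℕ} (i : Fin (n - 1)) : Fin n := ⟨(i : ℕ) + 1, by have := i.isLt; omega⟩

/-- `i` is a descent of the permutation `f` : `f(i) > f(i+1)`. -/
def Descent {n : ℕ} (f : Equiv.Perm (Fin n)) (i : Fin (n - 1)) : Prop :=
  f (finR i) < f (finL i)

/-- `i` is a recoil of the permutation `f` : `f⁻¹(i) > f⁻¹(i+1)`. -/
def Recoil {n : ℕ} (f : Equiv.Perm (Fin n)) (i : Fin (n - 1)) : Prop :=
  f⁻¹ (finR i) < f⁻¹ (finL i)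

/-- Braid words: letters are a generator index together with a sign
(`true` = positive letter `σ_i`, `false` = negative letter `σ_i⁻¹`). -/
abbrev BWord (n : ℕ) := List (Fin (n - 1) × Bool)

/-- The braid represented by a braid word. -/
def evalWord {n : ℕ} (w : BWord n) : BraidGroup n :=
  (w.map (fun x => if x.2 then braidGen x.1 else (braidGen x.1)⁻¹)).prod

namespace FreeMonoid

variable {α : Type*}

theorem of_mul_inj {a b : α} {u v : FreeMonoid α} (h : of a * u = of b * v) : a = b ∧ u = v := by
  simpa using congrArg toList h

theorem eq_one_or_exists_eq_of_mul (u : FreeMonoid α) : u = 1 ∨ ∃ a u', u = of a * u' := by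
  rcases u with _ | ⟨a, u'⟩
  exacts [.inl rfl, .inr ⟨a, ofList u', rfl⟩]

end FreeMonoid

/-- `t * c` is the least common right multiple of `t` and `d`. -/
def IsLeastComplement {M : Type*} [Monoid M] (t d c : M) : Prop :=
  d ∣ t * c ∧ ∀ z, d ∣ t * z → c ∣ z

namespace IsLeastComplement

variable {M : Type*} [Monoid M] {a b t d c c' : M}

theorem left_one (d : M) : IsLeastComplement 1 d d :=
  ⟨by rw [one_mul], fun _ h => by rwa [one_mul] at h⟩

theorem one_one (t : M) : IsLeastComplement t 1 1 :=
  ⟨one_dvd _, fun _ _ => one_dvd _⟩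

theorem mul (h₁ : IsLeastComplement a d c) (h₂ : IsLeastComplement b c c') :
    IsLeastComplement (a * b) d c' :=
  ⟨h₁.1.trans (by rw [mul_assoc]; exact mul_dvd_mul_left a h₂.1),
    fun z hz => h₂.2 z (h₁.2 _ (by rwa [mul_assoc] at hz))⟩

end IsLeastComplement

namespace BraidGroup

variable {n : ℕ}

section Lift

variable {G : Type*} [Group G] (f : Fin (n - 1) → G)
  (hcomm : ∀ i j : Fin (n - 1), (i : ℕ) + 2 ≤ j → f i * f j = f j * f i)
  (hbraid : ∀ i j : Fin (n - 1), (i : ℕ) + 1 = j → f i * f j * f i = f j * f i * f j)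

def lift : BraidGroup n →* G :=
  PresentedGroup.toGroup (rels := braidRels n) (f := f) <| by
    rintro r (⟨i, j, h, rfl⟩ | ⟨i, j, h, rfl⟩) <;>
      simp only [map_mul, map_inv, FreeGroup.lift_apply_of, mul_inv_eq_one]
    exacts [hcomm i j h, hbraid i j h]

theorem lift_braidGen (i : Fin (n - 1)) : lift f hcomm hbraid (braidGen i) = f i :=
  PresentedGroup.toGroup.of _

end Lift

theorem braidGen_commute {i j : Fin (n - 1)} (h : (i : ℕ) + 2 ≤ j) :
    braidGen (n := n) i * braidGen j = braidGen j * braidGen i :=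
  PresentedGroup.mk_eq_mk_of_mul_inv_mem (Or.inl ⟨i, j, h, rfl⟩)

theorem braidGen_braid {i j : Fin (n - 1)} (h : (i : ℕ) + 1 = j) :
    braidGen (n := n) i * braidGen j * braidGen i = braidGen j * braidGen i * braidGen j :=
  PresentedGroup.mk_eq_mk_of_mul_inv_mem (Or.inr ⟨i, j, h, rfl⟩)

end BraidGroup

def braidMonoidRel (n : ℕ) : FreeMonoid (Fin (n - 1)) → FreeMonoid (Fin (n - 1)) → Prop :=
  fun a b =>
    (∃ i j : Fin (n - 1), (i : ℕ) + 2 ≤ j ∧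
      a = FreeMonoid.of i * FreeMonoid.of j ∧ b = FreeMonoid.of j * FreeMonoid.of i) ∨
    (∃ i j : Fin (n - 1), (i : ℕ) + 1 = j ∧
      a = FreeMonoid.of i * FreeMonoid.of j * FreeMonoid.of i ∧
      b = FreeMonoid.of j * FreeMonoid.of i * FreeMonoid.of j)

abbrev BraidMonoid (n : ℕ) := PresentedMonoid (braidMonoidRel n)

namespace BraidMonoid

variable {n : ℕ}

abbrev σ (i : Fin (n - 1)) : BraidMonoid n := PresentedMonoid.of _ i

abbrev mk (u : FreeMonoid (Fin (n - 1))) : BraidMonoid n := PresentedMonoid.mk _ u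

theorem mk_mul (u v : FreeMonoid (Fin (n - 1))) : (mk (u * v) : BraidMonoid n) = mk u * mk v :=
  map_mul _ u v

section Generators

def Adjacent (i j : Fin (n - 1)) : Prop := (i : ℕ) + 1 = j ∨ (j : ℕ) + 1 = i

def Distant (i j : Fin (n - 1)) : Prop := (i : ℕ) + 2 ≤ j ∨ (j : ℕ) + 2 ≤ i

variable {i j : Fin (n - 1)}

theorem Adjacent.symm (h : Adjacent i j) : Adjacent j i := Or.symm h

theorem Distant.symm (h : Distant i j) : Distant j i := Or.symm h

theorem Adjacent.ne (h : Adjacent i j) : i ≠ j := by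
  rintro rfl; rcases h with h | h <;> omega

theorem Distant.ne (h : Distant i j) : i ≠ j := by
  rintro rfl; rcases h with h | h <;> omega

theorem Distant.not_adjacent (h : Distant i j) : ¬Adjacent i j := by
  unfold Adjacent Distant at *; omega

theorem eq_or_adjacent_or_distant (i j : Fin (n - 1)) : i = j ∨ Adjacent i j ∨ Distant i j := by
  unfold Adjacent Distant; omega

theorem adjacent_or_distant_of_ne (h : i ≠ j) : Adjacent i j ∨ Distant i j := by
  unfold Adjacent Distant; omega

theorem σ_commute (h : Distant i j) : σ i * σ j = σ j * σ i := by
  rcases h with h | h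
  · exact PresentedMonoid.mk_eq_mk_of_rel (Or.inl ⟨i, j, h, rfl, rfl⟩)
  · exact (PresentedMonoid.mk_eq_mk_of_rel (Or.inl ⟨j, i, h, rfl, rfl⟩)).symm

theorem σ_braid (h : Adjacent i j) : σ i * σ j * σ i = σ j * σ i * σ j := by
  rcases h with h | h
  · exact PresentedMonoid.mk_eq_mk_of_rel (Or.inr ⟨i, j, h, rfl, rfl⟩)
  · exact (PresentedMonoid.mk_eq_mk_of_rel (Or.inr ⟨j, i, h, rfl, rfl⟩)).symm

theorem σ_left_comm (h : Distant i j) (x : BraidMonoid n) : σ i * (σ j * x) = σ j * (σ i * x) := by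
  rw [← mul_assoc, σ_commute h, mul_assoc]

theorem σ_braid_mul (h : Adjacent i j) (x : BraidMonoid n) :
    σ i * (σ j * (σ i * x)) = σ j * (σ i * (σ j * x)) := by
  simp only [← mul_assoc, σ_braid h]

end Generators

def liftOfRels {M : Type*} [Monoid M] (f : Fin (n - 1) → M)
    (hcomm : ∀ i j : Fin (n - 1), (i : ℕ) + 2 ≤ j → f i * f j = f j * f i)
    (hbraid : ∀ i j : Fin (n - 1), (i : ℕ) + 1 = j → f i * f j * f i = f j * f i * f j) :
    BraidMonoid n →* M :=
  PresentedMonoid.lift f <| by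
    rintro a b (⟨i, j, h, rfl, rfl⟩ | ⟨i, j, h, rfl, rfl⟩) <;>
      simp only [map_mul, FreeMonoid.lift_eval_of]
    exacts [hcomm i j h, hbraid i j h]

@[elab_as_elim]
theorem induction_left {motive : BraidMonoid n → Prop} (x : BraidMonoid n) (one : motive 1)
    (σ_mul : ∀ i x, motive x → motive (σ i * x)) : motive x :=
  Submonoid.induction_of_closure_eq_top_left (PresentedMonoid.closure_range_of _) x one
    (by rintro _ ⟨i, rfl⟩ y hy; exact σ_mul i y hy)

theorem eq_one_or_exists_eq_σ_mul (x : BraidMonoid n) : x = 1 ∨ ∃ i y, x = σ i * y :=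
  induction_left x (.inl rfl) fun i y _ => .inr ⟨i, y, rfl⟩

def lengthHom : BraidMonoid n →* Multiplicative ℕ :=
  liftOfRels (fun _ => Multiplicative.ofAdd 1) (fun _ _ _ => rfl) (fun _ _ _ => rfl)

def len (x : BraidMonoid n) : ℕ := (lengthHom x).toAdd

@[simp] theorem len_mul (x y : BraidMonoid n) : len (x * y) = len x + len y := by
  simp [len]

@[simp] theorem len_one : len (1 : BraidMonoid n) = 0 := by simp [len]

@[simp] theorem len_σ (i : Fin (n - 1)) : len (σ i) = 1 := rfl

theorem len_mk (u : FreeMonoid (Fin (n - 1))) : len (mk u) = u.length := by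
  induction u using FreeMonoid.inductionOn' with
  | one => exact len_one
  | of_mul i u ih =>
    change len (σ i * mk u) = _
    rw [len_mul, len_σ, ih, FreeMonoid.length_mul, FreeMonoid.length_of]

theorem length_eq_of_rel {u v : FreeMonoid (Fin (n - 1))}
    (h : ConGen.Rel (braidMonoidRel n) u v) : u.length = v.length := by
  rw [← len_mk, ← len_mk]
  exact congrArg len (PresentedMonoid.mk_eq_mk_iff.mpr h)

def revHom : BraidMonoid n →* (BraidMonoid n)ᵐᵒᵖ :=
  liftOfRels (fun i => MulOpposite.op (σ i))
    (fun i j h => by simp only [← MulOpposite.op_mul, σ_commute (.inr h)])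
    (fun i j h => by simp only [← MulOpposite.op_mul, ← mul_assoc, σ_braid (.inr h)])

def rev (x : BraidMonoid n) : BraidMonoid n := (revHom x).unop

@[simp] theorem rev_mul (x y : BraidMonoid n) : rev (x * y) = rev y * rev x := by
  simp [rev]

@[simp] theorem rev_one : rev (1 : BraidMonoid n) = 1 := by simp [rev]

@[simp] theorem rev_σ (i : Fin (n - 1)) : rev (σ i) = σ i := rfl

@[simp] theorem rev_rev (x : BraidMonoid n) : rev (rev x) = x :=
  induction_left x (by simp) fun i x hx => by simp [hx]

theorem rev_injective : Function.Injective (rev : BraidMonoid n → BraidMonoid n) :=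
  Function.LeftInverse.injective rev_rev

@[simp] theorem len_rev (x : BraidMonoid n) : len (rev x) = len x :=
  induction_left x (by simp) fun i x hx => by simp [hx, add_comm]

section TheoremH

variable {i j p : Fin (n - 1)} {L : ℕ} {x y A B : BraidMonoid n}

open Classical in
/-- `σ j * complement i j = σ i * complement j i` is the least common right multiple of `σ i`
and `σ j`. -/
noncomputable def complement (i j : Fin (n - 1)) : BraidMonoid n :=
  if i = j then 1 else if Adjacent i j then σ i * σ j else σ i

@[simp] theorem complement_self (i : Fin (n - 1)) : complement i i = 1 := if_pos rfl

theorem complement_of_adjacent (h : Adjacent i j) : complement i j = σ i * σ j := by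
  rw [complement, if_neg h.ne, if_pos h]

theorem complement_of_distant (h : Distant i j) : complement i j = σ i := by
  rw [complement, if_neg h.ne, if_neg h.not_adjacent]

theorem σ_mul_complement_comm (i j : Fin (n - 1)) :
    σ i * complement j i = σ j * complement i j := by
  rcases eq_or_adjacent_or_distant i j with rfl | h | h
  · rfl
  · rw [complement_of_adjacent h.symm, complement_of_adjacent h, ← mul_assoc, ← mul_assoc,
      σ_braid h]
  · rw [complement_of_distant h.symm, complement_of_distant h, σ_commute h]

variable (n) in
/-- Garside's Theorem H, for `x` of length below `L`. -/
def LcmBelow (L : ℕ) : Prop :=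
  ∀ (i j : Fin (n - 1)) (x y : BraidMonoid n), len x < L → σ i * x = σ j * y →
    ∃ w, x = complement j i * w ∧ y = complement i j * w

theorem LcmBelow.cancel (H : LcmBelow n L) (hx : len x < L) (h : σ i * x = σ i * y) :
    x = y := by
  obtain ⟨w, rfl, rfl⟩ := H i i x y hx h
  rfl

theorem LcmBelow.cancel_complement (H : LcmBelow n L) (hx : len (complement i j * x) ≤ L)
    (h : complement i j * x = complement i j * y) : x = y := by
  rcases eq_or_adjacent_or_distant i j with rfl | hij | hij
  · simpa using h
  · rw [complement_of_adjacent hij, mul_assoc, mul_assoc] at h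
    rw [complement_of_adjacent hij] at hx
    simp only [len_mul, len_σ] at hx
    exact H.cancel (by omega) (H.cancel (by simp; omega) h)
  · rw [complement_of_distant hij] at h hx
    simp only [len_mul, len_σ] at hx
    exact H.cancel (by omega) h

theorem LcmBelow.cube_distant_distant_distant (H : LcmBelow n L) (hip : Distant i p)
    (hpj : Distant p j) (hij : Distant i j) (hlen : len (complement i p * A) ≤ L)
    (h : complement i p * A = complement j p * B) :
    ∃ w, complement p i * A = complement j i * w ∧ complement p j * B = complement i j * w := by
  rw [complement_of_distant hip, complement_of_distant hpj.symm] at h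
  rw [complement_of_distant hip, len_mul, len_σ] at hlen
  rw [complement_of_distant hip.symm, complement_of_distant hpj, complement_of_distant hij.symm,
    complement_of_distant hij]
  obtain ⟨y, hA, hB⟩ := H i j A B (by omega) h
  rw [complement_of_distant hij.symm] at hA
  rw [complement_of_distant hij] at hB
  exact ⟨σ p * y, by rw [hA, σ_left_comm hpj], by rw [hB, σ_left_comm hip.symm]⟩

theorem LcmBelow.cube_distant_distant_adjacent (H : LcmBelow n L) (hip : Distant i p)
    (hpj : Distant p j) (hij : Adjacent i j) (hlen : len (complement i p * A) ≤ L)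
    (h : complement i p * A = complement j p * B) :
    ∃ w, complement p i * A = complement j i * w ∧ complement p j * B = complement i j * w := by
  rw [complement_of_distant hip, complement_of_distant hpj.symm] at h
  rw [complement_of_distant hip, len_mul, len_σ] at hlen
  rw [complement_of_distant hip.symm, complement_of_distant hpj, complement_of_adjacent hij.symm,
    complement_of_adjacent hij]
  obtain ⟨y, hA, hB⟩ := H i j A B (by omega) h
  rw [complement_of_adjacent hij.symm, mul_assoc] at hA
  rw [complement_of_adjacent hij, mul_assoc] at hB
  refine ⟨σ p * y, ?_, ?_⟩
  · rw [hA, mul_assoc, σ_left_comm hpj, σ_left_comm hip.symm]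
  · rw [hB, mul_assoc, σ_left_comm hip.symm, σ_left_comm hpj]

theorem LcmBelow.cube_adjacent_distant_distant (H : LcmBelow n L) (hip : Adjacent i p)
    (hpj : Distant p j) (hij : Distant i j) (hlen : len (complement i p * A) ≤ L)
    (h : complement i p * A = complement j p * B) :
    ∃ w, complement p i * A = complement j i * w ∧ complement p j * B = complement i j * w := by
  rw [complement_of_adjacent hip, complement_of_distant hpj.symm, mul_assoc] at h
  rw [complement_of_adjacent hip, len_mul, len_mul, len_σ, len_σ] at hlen
  rw [complement_of_adjacent hip.symm, complement_of_distant hpj, complement_of_distant hij.symm,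
    complement_of_distant hij]
  obtain ⟨y, hy, hB⟩ := H i j (σ p * A) B (by simp; omega) h
  rw [complement_of_distant hij.symm] at hy
  rw [complement_of_distant hij] at hB
  obtain ⟨z, hA, hz⟩ := H p j A y (by omega) hy
  rw [complement_of_distant hpj.symm] at hA
  rw [complement_of_distant hpj] at hz
  refine ⟨σ p * (σ i * z), ?_, ?_⟩
  · rw [hA, mul_assoc, σ_left_comm hij, σ_left_comm hpj]
  · rw [hB, hz, σ_braid_mul hip.symm]

theorem LcmBelow.cube_adjacent_distant_adjacent (H : LcmBelow n L) (hip : Adjacent i p)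
    (hpj : Distant p j) (hij : Adjacent i j) (hlen : len (complement i p * A) ≤ L)
    (h : complement i p * A = complement j p * B) :
    ∃ w, complement p i * A = complement j i * w ∧ complement p j * B = complement i j * w := by
  rw [complement_of_adjacent hip, complement_of_distant hpj.symm, mul_assoc] at h
  rw [complement_of_adjacent hip, len_mul, len_mul, len_σ, len_σ] at hlen
  rw [complement_of_adjacent hip.symm, complement_of_distant hpj, complement_of_adjacent hij.symm,
    complement_of_adjacent hij]
  obtain ⟨y, hy, hB⟩ := H i j (σ p * A) B (by simp; omega) h
  rw [complement_of_adjacent hij.symm, mul_assoc] at hy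
  rw [complement_of_adjacent hij, mul_assoc] at hB
  obtain ⟨z, hA, hz⟩ := H p j A (σ i * y) (by omega) hy
  rw [complement_of_distant hpj.symm] at hA
  rw [complement_of_distant hpj] at hz
  have hyL : len y < L := by
    have := congrArg len hy
    simp only [len_mul, len_σ] at this
    omega
  obtain ⟨v, hy', hz'⟩ := H i p y z hyL hz
  rw [complement_of_adjacent hip.symm, mul_assoc] at hy'
  rw [complement_of_adjacent hip, mul_assoc] at hz'
  refine ⟨σ p * (σ i * (σ j * v)), ?_, ?_⟩
  · simp only [hA, hz', mul_assoc]
    rw [σ_braid_mul hij, σ_left_comm hpj, σ_left_comm hpj.symm v, σ_braid_mul hip.symm]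
  · simp only [hB, hy', mul_assoc]
    rw [σ_left_comm hpj.symm, σ_braid_mul hip.symm, σ_braid_mul hij, σ_left_comm hpj]

theorem LcmBelow.cube_adjacent_adjacent_distant (H : LcmBelow n L) (hip : Adjacent i p)
    (hpj : Adjacent p j) (hij : Distant i j) (hlen : len (complement i p * A) ≤ L)
    (h : complement i p * A = complement j p * B) :
    ∃ w, complement p i * A = complement j i * w ∧ complement p j * B = complement i j * w := by
  rw [complement_of_adjacent hip, complement_of_adjacent hpj.symm, mul_assoc, mul_assoc] at h
  rw [complement_of_adjacent hip, len_mul, len_mul, len_σ, len_σ] at hlen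
  rw [complement_of_adjacent hip.symm, complement_of_adjacent hpj, complement_of_distant hij.symm,
    complement_of_distant hij]
  have hAB : len A = len B := by
    have := congrArg len h
    simp only [len_mul, len_σ] at this
    omega
  obtain ⟨y, hy, hy'⟩ := H i j (σ p * A) (σ p * B) (by simp; omega) h
  rw [complement_of_distant hij.symm] at hy
  rw [complement_of_distant hij] at hy'
  obtain ⟨z, hA, hz⟩ := H p j A y (by omega) hy
  rw [complement_of_adjacent hpj.symm, mul_assoc] at hA
  rw [complement_of_adjacent hpj, mul_assoc] at hz
  rw [hz] at hy'
  obtain ⟨z', hB, hz'⟩ := H p i B (σ p * (σ j * z)) (by omega) hy'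
  rw [complement_of_adjacent hip, mul_assoc] at hB
  rw [complement_of_adjacent hip.symm, mul_assoc] at hz'
  have hzA : len z + 2 = len A := by
    have := congrArg len hA
    simp only [len_mul, len_σ] at this
    omega
  obtain ⟨v, hzv, hz'v⟩ := H j i z z' (by omega) (H.cancel (by simp; omega) hz')
  rw [complement_of_distant hij] at hzv
  rw [complement_of_distant hij.symm] at hz'v
  refine ⟨σ p * (σ j * (σ i * (σ p * v))), ?_, ?_⟩
  · rw [hA, hzv, mul_assoc, σ_left_comm hij (σ p * (σ i * v)), σ_braid_mul hip, σ_braid_mul hpj]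
  · rw [hB, hz'v, mul_assoc, σ_left_comm hij.symm (σ p * (σ j * v)), σ_braid_mul hpj.symm,
      σ_braid_mul hip.symm, σ_left_comm hij (σ p * v)]

theorem LcmBelow.cube (H : LcmBelow n L) (hlen : len (complement i p * A) ≤ L)
    (h : complement i p * A = complement j p * B) :
    ∃ w, complement p i * A = complement j i * w ∧ complement p j * B = complement i j * w := by
  by_cases hip : i = p
  · subst hip
    exact ⟨B, by simpa using h, rfl⟩
  by_cases hpj : p = j
  · subst hpj
    exact ⟨A, rfl, by simpa using h.symm⟩
  by_cases hij : i = j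
  · subst hij
    obtain rfl := H.cancel_complement hlen h
    exact ⟨complement p i * A, by simp, by simp⟩
  have hlen' : len (complement j p * B) ≤ L := h ▸ hlen
  rcases adjacent_or_distant_of_ne hip with hip | hip <;>
  rcases adjacent_or_distant_of_ne hpj with hpj | hpj <;>
  rcases adjacent_or_distant_of_ne hij with hij | hij
  · exact absurd hij (by unfold Adjacent at *; omega)
  · exact H.cube_adjacent_adjacent_distant hip hpj hij hlen h
  · exact H.cube_adjacent_distant_adjacent hip hpj hij hlen h
  · exact H.cube_adjacent_distant_distant hip hpj hij hlen h
  -- the next two shapes are earlier ones with `(i, A)` and `(j, B)` exchanged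
  · obtain ⟨w, h₁, h₂⟩ :=
      H.cube_adjacent_distant_adjacent hpj.symm hip.symm hij.symm hlen' h.symm
    exact ⟨w, h₂, h₁⟩
  · obtain ⟨w, h₁, h₂⟩ :=
      H.cube_adjacent_distant_distant hpj.symm hip.symm hij.symm hlen' h.symm
    exact ⟨w, h₂, h₁⟩
  · exact H.cube_distant_distant_adjacent hip hpj hij hlen h
  · exact H.cube_distant_distant_distant hip hpj hij hlen h

/-- Theorem H for two words of length at most `L + 1` with first letters `i` and `j`. -/
def HeadsFactor (L : ℕ) (u v : FreeMonoid (Fin (n - 1))) : Prop :=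
  u.length ≤ L + 1 → ∀ i j u' v', u = FreeMonoid.of i * u' → v = FreeMonoid.of j * v' →
    ∃ w, mk u' = complement j i * w ∧ mk v' = complement i j * w

variable {u v w u₁ v₁ u₂ v₂ : FreeMonoid (Fin (n - 1))}

theorem headsFactor_of_rel (h : braidMonoidRel n u v) : HeadsFactor L u v := by
  intro _ i' j' u' v' hu hv
  rcases h with ⟨i, j, hij, rfl, rfl⟩ | ⟨i, j, hij, rfl, rfl⟩
  · obtain ⟨rfl, rfl⟩ := FreeMonoid.of_mul_inj hu
    obtain ⟨rfl, rfl⟩ := FreeMonoid.of_mul_inj hv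
    have hij : Distant i j := .inl hij
    exact ⟨1, by rw [complement_of_distant hij.symm, mul_one]; rfl,
      by rw [complement_of_distant hij, mul_one]; rfl⟩
  · rw [mul_assoc] at hu hv
    obtain ⟨rfl, rfl⟩ := FreeMonoid.of_mul_inj hu
    obtain ⟨rfl, rfl⟩ := FreeMonoid.of_mul_inj hv
    have hij : Adjacent i j := .inl hij
    exact ⟨1, by rw [complement_of_adjacent hij.symm, mul_one]; rfl,
      by rw [complement_of_adjacent hij, mul_one]; rfl⟩

theorem headsFactor_refl (u : FreeMonoid (Fin (n - 1))) : HeadsFactor L u u := by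
  rintro _ i j u' v' rfl hv
  obtain ⟨rfl, rfl⟩ := FreeMonoid.of_mul_inj hv
  exact ⟨mk u', by simp, by simp⟩

theorem HeadsFactor.symm (h : HeadsFactor L u v) (huv : u.length = v.length) :
    HeadsFactor L v u := by
  intro hv i j v' u' hv' hu'
  obtain ⟨w, h₁, h₂⟩ := h (huv ▸ hv) j i u' v' hu' hv'
  exact ⟨w, h₂, h₁⟩

theorem LcmBelow.headsFactor_trans (H : LcmBelow n L) (h₁ : HeadsFactor L u v)
    (h₂ : HeadsFactor L v w) (huv : u.length = v.length) : HeadsFactor L u w := by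
  intro hu i j u' w' hu' hw'
  obtain rfl | ⟨p, v', rfl⟩ := v.eq_one_or_exists_eq_of_mul
  · simp [hu', FreeMonoid.length_mul] at huv
  obtain ⟨w₁, hu'₁, hv'₁⟩ := h₁ hu i p u' v' hu' rfl
  obtain ⟨w₂, hv'₂, hw'₂⟩ := h₂ (huv ▸ hu) p j v' w' rfl hw'
  have hlen : len (complement i p * w₁) ≤ L := by
    rw [← hv'₁, len_mk]
    simp only [FreeMonoid.length_mul, FreeMonoid.length_of] at huv hu
    omega
  obtain ⟨w₃, h₃, h₄⟩ := H.cube hlen (hv'₁.symm.trans hv'₂)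
  exact ⟨w₃, by rw [hu'₁, h₃], by rw [hw'₂, h₄]⟩

theorem HeadsFactor.mul (h₁ : HeadsFactor L u₁ v₁) (h₂ : HeadsFactor L u₂ v₂)
    (hl : u₁.length = v₁.length) (hm : mk u₂ = mk v₂) :
    HeadsFactor L (u₁ * u₂) (v₁ * v₂) := by
  intro hu i j u' v' hu' hv'
  obtain rfl | ⟨i₁, u₁', rfl⟩ := u₁.eq_one_or_exists_eq_of_mul
  · obtain rfl : v₁ = 1 := FreeMonoid.length_eq_zero.mp hl.symm
    exact h₂ (by simpa using hu) i j u' v' (by simpa using hu') (by simpa using hv')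
  obtain rfl | ⟨j₁, v₁', rfl⟩ := v₁.eq_one_or_exists_eq_of_mul
  · simp [FreeMonoid.length_mul] at hl
  rw [mul_assoc] at hu' hv'
  obtain ⟨rfl, rfl⟩ := FreeMonoid.of_mul_inj hu'
  obtain ⟨rfl, rfl⟩ := FreeMonoid.of_mul_inj hv'
  obtain ⟨w, hw₁, hw₂⟩ := h₁ (by simp only [FreeMonoid.length_mul] at hu ⊢; omega) i₁ j₁ u₁' v₁'
    rfl rfl
  exact ⟨w * mk u₂, by rw [mk_mul, hw₁, mul_assoc], by rw [mk_mul, hw₂, mul_assoc, hm]⟩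

theorem LcmBelow.headsFactor (H : LcmBelow n L) (h : ConGen.Rel (braidMonoidRel n) u v) :
    HeadsFactor L u v := by
  induction h with
  | of _ _ h => exact headsFactor_of_rel h
  | refl => exact headsFactor_refl _
  | symm h ih => exact ih.symm (length_eq_of_rel h)
  | trans h _ ih₁ ih₂ => exact H.headsFactor_trans ih₁ ih₂ (length_eq_of_rel h)
  | mul h₁ h₂ ih₁ ih₂ =>
    exact ih₁.mul ih₂ (length_eq_of_rel h₁) (PresentedMonoid.mk_eq_mk_iff.mpr h₂)

theorem LcmBelow.succ (H : LcmBelow n L) : LcmBelow n (L + 1) := by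
  intro i j x y hx h
  obtain ⟨u, rfl⟩ := PresentedMonoid.surjective_mk x
  obtain ⟨v, rfl⟩ := PresentedMonoid.surjective_mk y
  refine H.headsFactor (PresentedMonoid.mk_eq_mk_iff.mp h) ?_ i j u v rfl rfl
  rw [len_mk] at hx
  simp only [FreeMonoid.length_mul, FreeMonoid.length_of]
  omega

theorem lcmBelow (L : ℕ) : LcmBelow n L := by
  induction L with
  | zero => intro _ _ _ _ h; exact absurd h (Nat.not_lt_zero _)
  | succ L H => exact H.succ

theorem exists_eq_complement_mul (h : σ i * x = σ j * y) :
    ∃ w, x = complement j i * w ∧ y = complement i j * w :=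
  lcmBelow (len x + 1) i j x y (Nat.lt_succ_self _) h

instance : IsLeftCancelMul (BraidMonoid n) where
  mul_left_cancel t x y h := by
    induction t using induction_left generalizing x y with
    | one => simpa using h
    | σ_mul i t ih =>
      simp only [mul_assoc] at h
      exact ih _ _ ((lcmBelow _).cancel (Nat.lt_succ_self _) h)

instance : IsCancelMul (BraidMonoid n) where
  mul_right_cancel t x y h := by
    apply rev_injective
    apply mul_left_cancel (a := rev t)
    simpa using congrArg rev h

end TheoremH

section LeastComplement

variable {i m : Fin (n - 1)} {d c : BraidMonoid n}

theorem isLeastComplement_σ_σ_mul (h : IsLeastComplement (complement i m) d c) :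
    IsLeastComplement (σ i) (σ m * d) (complement m i * c) := by
  refine ⟨by rw [← mul_assoc, σ_mul_complement_comm, mul_assoc]; exact mul_dvd_mul_left _ h.1,
    fun z ⟨q, hq⟩ => ?_⟩
  rw [mul_assoc] at hq
  obtain ⟨w, rfl, hw⟩ := exists_eq_complement_mul hq
  exact mul_dvd_mul_left _ (h.2 w ⟨q, hw.symm⟩)

variable (n) in
def LeastComplementsBelow (N : ℕ) : Prop :=
  ∀ (i : Fin (n - 1)) (d z : BraidMonoid n), len (σ i * z) ≤ N → d ∣ σ i * z →
    ∃ c, IsLeastComplement (σ i) d c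

theorem LeastComplementsBelow.exists {N : ℕ} (H : LeastComplementsBelow n N) (t : BraidMonoid n) :
    ∀ d z, len (t * z) ≤ N → d ∣ t * z → ∃ c, IsLeastComplement t d c := by
  induction t using induction_left with
  | one => exact fun d _ _ _ => ⟨d, .left_one d⟩
  | σ_mul a t ih =>
    intro d z hN hd
    rw [mul_assoc] at hN hd
    obtain ⟨c₁, hc₁⟩ := H a d (t * z) hN hd
    obtain ⟨c₂, hc₂⟩ := ih c₁ z (by simp at hN ⊢; omega) (hc₁.2 _ hd)
    exact ⟨c₂, hc₁.mul hc₂⟩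

theorem LeastComplementsBelow.succ {N : ℕ} (H : LeastComplementsBelow n N) :
    LeastComplementsBelow n (N + 1) := by
  intro i d z hN hd
  obtain rfl | ⟨m, d, rfl⟩ := eq_one_or_exists_eq_σ_mul d
  · exact ⟨1, .one_one _⟩
  obtain ⟨q, hq⟩ := hd
  rw [mul_assoc] at hq
  obtain ⟨w, rfl, hw⟩ := exists_eq_complement_mul hq
  have hlen : len (complement i m * w) ≤ N := by
    have h₁ := congrArg len hq
    have h₂ := congrArg len hw
    simp only [len_mul, len_σ] at h₁ h₂ hN ⊢
    omega
  obtain ⟨c, hc⟩ := H.exists _ d w hlen ⟨q, hw.symm⟩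
  exact ⟨_, isLeastComplement_σ_σ_mul hc⟩

theorem exists_isLeastComplement {t d z : BraidMonoid n} (h : d ∣ t * z) :
    ∃ c, IsLeastComplement t d c := by
  have H : ∀ N, LeastComplementsBelow n N := by
    intro N
    induction N with
    | zero => intro i d z hN; simp at hN
    | succ N ih => exact ih.succ
  exact (H _).exists t d z le_rfl h

end LeastComplement

section Delta

variable {i j m k : ℕ} {x t q : BraidMonoid n}

-- the junk value `1` for `i ≥ n - 1` matches `deltaAux`, so that `delta` maps onto it
def gen (i : ℕ) : BraidMonoid n := if h : i < n - 1 then σ ⟨i, h⟩ else 1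

def ascending (m : ℕ) : BraidMonoid n := ((List.range m).map gen).prod

def delta : ℕ → BraidMonoid n
  | 0 => 1
  | m + 1 => ascending m * delta m

theorem gen_of_lt (h : i < n - 1) : (gen i : BraidMonoid n) = σ ⟨i, h⟩ := dif_pos h

theorem gen_of_le (h : n - 1 ≤ i) : (gen i : BraidMonoid n) = 1 := dif_neg (by omega)

@[simp] theorem rev_gen (i : ℕ) : rev (gen i : BraidMonoid n) = gen i := by
  unfold gen; split_ifs <;> simp

theorem ascending_succ (m : ℕ) : (ascending (m + 1) : BraidMonoid n) = ascending m * gen m := by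
  simp [ascending, List.range_succ]

theorem gen_zero_dvd_ascending (hm : 0 < m) : (gen 0 : BraidMonoid n) ∣ ascending m := by
  obtain ⟨m, rfl⟩ := Nat.exists_eq_add_of_lt hm
  simp [ascending, List.range_succ_eq_map]

theorem gen_commute (h : i + 2 ≤ j) : (gen i : BraidMonoid n) * gen j = gen j * gen i := by
  by_cases hj : j < n - 1
  · rw [gen_of_lt (by omega : i < n - 1), gen_of_lt hj]
    exact σ_commute (.inl h)
  · rw [gen_of_le (by omega : n - 1 ≤ j), mul_one, one_mul]

theorem gen_braid (h : i + 1 < n - 1) :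
    (gen i : BraidMonoid n) * gen (i + 1) * gen i = gen (i + 1) * gen i * gen (i + 1) := by
  rw [gen_of_lt (by omega : i < n - 1), gen_of_lt h]
  exact σ_braid (.inl rfl)

theorem gen_commute_ascending (h : m < j) :
    (gen j : BraidMonoid n) * ascending m = ascending m * gen j := by
  induction m with
  | zero => simp [ascending]
  | succ m ih =>
    rw [ascending_succ, ← mul_assoc, ih (by omega), mul_assoc,
      ← gen_commute (by omega : m + 2 ≤ j), ← mul_assoc]

theorem gen_commute_delta (h : m ≤ j) : (gen j : BraidMonoid n) * delta m = delta m * gen j := by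
  induction m with
  | zero => simp [delta]
  | succ m ih =>
    rw [delta, ← mul_assoc, gen_commute_ascending (by omega), mul_assoc, ih (by omega), mul_assoc]

theorem gen_succ_mul_ascending (him : i + 1 < m) (hin : i + 1 < n - 1) :
    (gen (i + 1) : BraidMonoid n) * ascending m = ascending m * gen i := by
  induction m with
  | zero => omega
  | succ m ih =>
    rcases Nat.lt_or_ge (i + 1) m with h | h
    · rw [ascending_succ, ← mul_assoc, ih h, mul_assoc, gen_commute (by omega : i + 2 ≤ m),
        mul_assoc]
    · obtain rfl : m = i + 1 := by omega
      rw [ascending_succ, ascending_succ]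
      calc (gen (i + 1) : BraidMonoid n) * (ascending i * gen i * gen (i + 1))
          = gen (i + 1) * ascending i * (gen i * gen (i + 1)) := by simp only [mul_assoc]
        _ = ascending i * (gen (i + 1) * gen i * gen (i + 1)) := by
          rw [gen_commute_ascending (Nat.lt_succ_self i)]; simp only [mul_assoc]
        _ = ascending i * gen i * gen (i + 1) * gen i := by
          rw [← gen_braid hin]; simp only [mul_assoc]

def descending (m : ℕ) : BraidMonoid n := rev (ascending m)

theorem descending_succ (m : ℕ) :
    (descending (m + 1) : BraidMonoid n) = gen m * descending m := by
  rw [descending, ascending_succ, rev_mul, rev_gen, descending]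

theorem gen_mul_descending (him : i + 1 < m) (hin : i + 1 < n - 1) :
    (gen i : BraidMonoid n) * descending m = descending m * gen (i + 1) := by
  simpa [descending] using (congrArg rev (gen_succ_mul_ascending him hin)).symm

theorem delta_succ (m : ℕ) : (delta (m + 1) : BraidMonoid n) = delta m * descending m := by
  induction m with
  | zero => simp [delta, descending, ascending]
  | succ m ih =>
    calc (delta (m + 2) : BraidMonoid n) = ascending m * (gen m * delta m) * descending m := by
          rw [delta, ascending_succ, ih]; simp only [mul_assoc]
      _ = delta (m + 1) * descending (m + 1) := by
          rw [gen_commute_delta le_rfl, descending_succ, delta]; simp only [mul_assoc]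

theorem gen_mul_delta (hm : m ≤ n) (h : i + j + 2 = m) :
    (gen i : BraidMonoid n) * delta m = delta m * gen j := by
  induction m generalizing i j with
  | zero => omega
  | succ m ih =>
    rcases i with _ | i
    · rcases j with _ | j
      · obtain rfl : m = 1 := by omega
        simp [delta, ascending]
      · rw [delta_succ, ← mul_assoc, ih (by omega) (by omega : 0 + j + 2 = m), mul_assoc,
          gen_mul_descending (by omega) (by omega), mul_assoc]
    · rw [delta, ← mul_assoc, gen_succ_mul_ascending (by omega) (by omega), mul_assoc,
        ih (by omega) (by omega : i + j + 2 = m), mul_assoc]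

theorem gen_dvd_delta (h : i + 1 < m) : (gen i : BraidMonoid n) ∣ delta m := by
  induction m generalizing i with
  | zero => omega
  | succ m ih =>
    rw [delta]
    rcases i with _ | i
    · exact dvd_mul_of_dvd_left (gen_zero_dvd_ascending (by omega)) _
    by_cases hin : i + 1 < n - 1
    · obtain ⟨y, hy⟩ := ih (by omega : i + 1 < m)
      rw [hy, ← mul_assoc, ← gen_succ_mul_ascending (by omega) hin, mul_assoc]
      exact dvd_mul_right _ _
    · rw [gen_of_le (by omega)]
      exact one_dvd _

theorem σ_dvd_delta (i : Fin (n - 1)) : σ i ∣ (delta n : BraidMonoid n) := by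
  simpa [gen_of_lt i.isLt] using gen_dvd_delta (n := n) (i := i) (m := n) (by omega)

theorem σ_mul_delta (i : Fin (n - 1)) : σ i * delta n = delta n * σ i.rev := by
  have := gen_mul_delta (n := n) (i := i) (j := i.rev) le_rfl (by simp [Fin.val_rev]; omega)
  rwa [gen_of_lt i.isLt, gen_of_lt i.rev.isLt] at this

def deltaConj : BraidMonoid n →* BraidMonoid n :=
  liftOfRels (fun i => σ i.rev)
    (fun i j h => σ_commute (.inr (by simp only [Fin.val_rev]; omega)))
    (fun i j h => σ_braid (.inr (by simp only [Fin.val_rev]; omega)))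

theorem mul_delta (x : BraidMonoid n) : x * delta n = delta n * deltaConj x :=
  induction_left x (by simp) fun i x hx => by
    rw [map_mul, mul_assoc, hx, ← mul_assoc, σ_mul_delta, mul_assoc]
    rfl

theorem mul_delta_pow (x : BraidMonoid n) (k : ℕ) :
    x * delta n ^ k = delta n ^ k * (⇑deltaConj)^[k] x := by
  induction k generalizing x with
  | zero => simp
  | succ k ih =>
    rw [pow_succ, ← mul_assoc, ih, mul_assoc, mul_delta, ← mul_assoc,
      Function.iterate_succ_apply']

theorem dvd_delta_pow_len (x : BraidMonoid n) : x ∣ delta n ^ len x :=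
  induction_left x (by simp) fun i x hx => by
    obtain ⟨c, hc⟩ := σ_dvd_delta i
    rw [len_mul, len_σ, add_comm, pow_succ']
    nth_rw 1 [hc]
    rw [mul_assoc, mul_delta_pow]
    exact mul_dvd_mul_left _ (dvd_mul_of_dvd_left hx _)

theorem dvd_delta_pow (h : len x ≤ k) : x ∣ delta n ^ k :=
  (dvd_delta_pow_len x).trans (pow_dvd_pow _ h)

theorem exists_mul_eq_rev_delta_pow (h : len x ≤ k) : ∃ c, c * x = rev (delta n ^ k) := by
  obtain ⟨c, hc⟩ := dvd_delta_pow (k := k) (by rwa [len_rev] : len (rev x) ≤ k)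
  exact ⟨rev c, by rw [hc, rev_mul, rev_rev]⟩

theorem dvd_delta_of_mul_eq (h : t * q = delta n) : q ∣ delta n :=
  ⟨deltaConj t, mul_left_cancel (a := t) (by rw [mul_delta, ← mul_assoc, h])⟩

end Delta

noncomputable instance : OreLocalization.OreSet (⊤ : Submonoid (BraidMonoid n)) where
  ore_right_cancel _ _ _ h := ⟨1, by rw [mul_right_cancel h]⟩
  oreNum r s := (exists_mul_eq_rev_delta_pow (le_max_right (len r) (len s.1))).choose
  oreDenom r s := ⟨(exists_mul_eq_rev_delta_pow (le_max_left (len r) (len s.1))).choose, trivial⟩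
  ore_eq r s := (exists_mul_eq_rev_delta_pow (le_max_left (len r) (len s.1))).choose_spec.trans
    (exists_mul_eq_rev_delta_pow (le_max_right (len r) (len s.1))).choose_spec.symm

abbrev Fractions (n : ℕ) := OreLocalization (⊤ : Submonoid (BraidMonoid n)) (BraidMonoid n)

theorem numeratorHom_injective :
    Function.Injective (OreLocalization.numeratorHom : BraidMonoid n →* Fractions n) := by
  intro x y h
  rw [OreLocalization.numeratorHom_apply, OreLocalization.numeratorHom_apply,
    OreLocalization.oreDiv_eq_iff] at h
  obtain ⟨u, v, h₁, h₂⟩ := h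
  simp only [Submonoid.smul_def, smul_eq_mul, OneMemClass.coe_one, mul_one] at h₁ h₂
  rw [← h₂] at h₁
  exact (mul_left_cancel h₁).symm

def toBraidGroup : BraidMonoid n →* BraidGroup n :=
  liftOfRels braidGen (fun _ _ => BraidGroup.braidGen_commute)
    (fun _ _ => BraidGroup.braidGen_braid)

@[simp] theorem toBraidGroup_σ (i : Fin (n - 1)) : toBraidGroup (σ i) = braidGen i := rfl

noncomputable def toUnit (x : BraidMonoid n) : (Fractions n)ˣ :=
  OreLocalization.numeratorUnit ⟨x, Submonoid.mem_top x⟩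

theorem coe_toUnit (x : BraidMonoid n) :
    (toUnit x : Fractions n) = OreLocalization.numeratorHom x :=
  rfl

noncomputable def toFractionUnits : BraidGroup n →* (Fractions n)ˣ :=
  BraidGroup.lift (fun i => toUnit (σ i))
    (fun i j h => Units.ext <| by
      simp only [Units.val_mul, coe_toUnit, ← map_mul, σ_commute (.inl h)])
    (fun i j h => Units.ext <| by
      simp only [Units.val_mul, coe_toUnit, ← map_mul, σ_braid (.inl h)])

theorem toFractionUnits_toBraidGroup (x : BraidMonoid n) :
    (toFractionUnits (toBraidGroup x) : Fractions n) = OreLocalization.numeratorHom x := by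
  induction x using induction_left with
  | one => rw [map_one, map_one, map_one, Units.val_one]
  | σ_mul i x ih =>
    rw [map_mul, map_mul, Units.val_mul, ih, map_mul, toBraidGroup_σ, toFractionUnits,
      BraidGroup.lift_braidGen, coe_toUnit]

theorem toBraidGroup_injective : Function.Injective (toBraidGroup : BraidMonoid n →* _) :=
  fun x y h => numeratorHom_injective <| by
    rw [← toFractionUnits_toBraidGroup, ← toFractionUnits_toBraidGroup, h]

theorem mrange_toBraidGroup : MonoidHom.mrange (toBraidGroup (n := n)) = PosBraid n := by
  rw [MonoidHom.mrange_eq_map, ← PresentedMonoid.closure_range_of, MonoidHom.map_mclosure,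
    ← Set.range_comp]
  rfl

theorem mem_posBraid_iff {b : BraidGroup n} : b ∈ PosBraid n ↔ ∃ x, toBraidGroup x = b := by
  rw [← mrange_toBraidGroup, MonoidHom.mem_mrange]

theorem toBraidGroup_mem_posBraid (x : BraidMonoid n) : toBraidGroup x ∈ PosBraid n :=
  mem_posBraid_iff.2 ⟨x, rfl⟩

theorem dividesL_toBraidGroup_iff {x y : BraidMonoid n} :
    DividesL (toBraidGroup x) (toBraidGroup y) ↔ x ∣ y := by
  constructor
  · rintro ⟨z, hz, hy⟩
    obtain ⟨c, rfl⟩ := mem_posBraid_iff.1 hz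
    exact ⟨c, toBraidGroup_injective (by rw [hy, map_mul])⟩
  · rintro ⟨c, rfl⟩
    exact ⟨toBraidGroup c, toBraidGroup_mem_posBraid c, map_mul _ _ _⟩

theorem toBraidGroup_delta (m : ℕ) : toBraidGroup (delta m : BraidMonoid n) = deltaAux n m := by
  induction m with
  | zero => exact map_one _
  | succ m ih =>
    rw [delta, deltaAux, map_mul, ih, ascending, map_list_prod, List.map_map]
    congr 2
    refine List.map_congr_left fun i _ => ?_
    simp only [Function.comp_apply, gen, apply_dite toBraidGroup, toBraidGroup_σ, map_one]

theorem dividesL_braidDelta_iff {x : BraidMonoid n} :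
    DividesL (toBraidGroup x) (braidDelta n) ↔ x ∣ delta n := by
  rw [braidDelta, ← toBraidGroup_delta, dividesL_toBraidGroup_iff]

theorem gNormal_toBraidGroup_iff {s₁ s₂ : BraidMonoid n} :
    GNormal (toBraidGroup s₁) (toBraidGroup s₂) ↔
      s₁ ∣ delta n ∧ ∀ c, c ∣ s₁ * s₂ → c ∣ delta n → c ∣ s₁ := by
  simp only [GNormal, IsLeftGcd, ← map_mul, dividesL_braidDelta_iff]
  constructor
  · rintro ⟨-, -, hΔ, h⟩
    refine ⟨hΔ, fun c h₁ h₂ => dividesL_toBraidGroup_iff.1 <| h _ (toBraidGroup_mem_posBraid c)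
      (dividesL_toBraidGroup_iff.2 h₁) (dividesL_braidDelta_iff.2 h₂)⟩
  · rintro ⟨hΔ, h⟩
    refine ⟨toBraidGroup_mem_posBraid s₁, dividesL_toBraidGroup_iff.2 (dvd_mul_right s₁ s₂), hΔ,
      fun d hd h₁ h₂ => ?_⟩
    obtain ⟨d, rfl⟩ := mem_posBraid_iff.1 hd
    exact dividesL_toBraidGroup_iff.2 <|
      h d (dividesL_toBraidGroup_iff.1 h₁) (dividesL_braidDelta_iff.1 h₂)

variable {s s₁ s₂ s₁' s₂' t t₀ t₁ t₂ a b d : BraidMonoid n}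

theorem dvd_mul_of_dvd_mul_mul (ht : t ∣ delta n) (hd : d ∣ delta n) (hdt : d ∣ t * (s₁ * s₂))
    (hn : ∀ c, c ∣ s₁ * s₂ → c ∣ delta n → c ∣ s₁) : d ∣ t * s₁ := by
  obtain ⟨c, hc⟩ := exists_isLeastComplement hdt
  obtain ⟨q, hq⟩ := ht
  have hcΔ : c ∣ delta n := (hc.2 q (hq ▸ hd)).trans (dvd_delta_of_mul_eq hq.symm)
  exact hc.1.trans (mul_dvd_mul_left t (hn c (hc.2 _ hdt) hcΔ))

theorem dvd_of_dvd_mul_of_dvd_mul (ha : d ∣ s * a) (hb : d ∣ s * b)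
    (hab : ∀ c, c ∣ a → c ∣ b → c = 1) : d ∣ s := by
  obtain ⟨c, hc⟩ := exists_isLeastComplement ha
  simpa [hab c (hc.2 a ha) (hc.2 b hb)] using hc.1

theorem dvd_of_tile (ht₂ : t₂ ∣ delta n) (e₁ : t₂ * s₁ = s₁' * t₁) (e₂ : t₁ * s₂ = s₂' * t₀)
    (hgcd : ∀ c, c ∣ s₂' → c ∣ t₁ → c = 1) (hn : ∀ c, c ∣ s₁ * s₂ → c ∣ delta n → c ∣ s₁)
    (hd : d ∣ s₁' * s₂') (hdΔ : d ∣ delta n) : d ∣ s₁' := by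
  have h₁ : d ∣ t₂ * (s₁ * s₂) :=
    hd.trans ⟨t₀, by rw [← mul_assoc, e₁, mul_assoc, e₂, mul_assoc]⟩
  have h₂ : d ∣ s₁' * t₁ := e₁ ▸ dvd_mul_of_dvd_mul_mul ht₂ hdΔ h₁ hn
  exact dvd_of_dvd_mul_of_dvd_mul h₂ hd fun c h₁ h₂ => hgcd c h₂ h₁

end BraidMonoid

open BraidMonoid in
/-- Grid lemma for `C`-tiles: with `t_2 s_1 = s'_1 t_1`, `t_1 s_2 = s'_2 t_0`
and `gcd_L(s'_2, t_1) = 1`, normality of `(s_1, s_2)` implies that of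
`(s'_1, s'_2)`. -/
theorem grid_C_tile (n : ℕ) (s1 s2 s1' s2' t0 t1 t2 : BraidGroup n)
    (hs1 : Simple s1) (hs2 : Simple s2) (hs1' : Simple s1') (hs2' : Simple s2')
    (ht0 : Simple t0) (ht1 : Simple t1) (ht2 : Simple t2)
    (e1 : t2 * s1 = s1' * t1) (e2 : t1 * s2 = s2' * t0)
    (hgcd : ∀ d ∈ PosBraid n, DividesL d s2' → DividesL d t1 → d = 1)
    (hn : GNormal s1 s2) :
    GNormal s1' s2' := by
  obtain ⟨s1, rfl⟩ := mem_posBraid_iff.1 hs1.1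
  obtain ⟨s2, rfl⟩ := mem_posBraid_iff.1 hs2.1
  obtain ⟨s1', rfl⟩ := mem_posBraid_iff.1 hs1'.1
  obtain ⟨s2', rfl⟩ := mem_posBraid_iff.1 hs2'.1
  obtain ⟨t0, rfl⟩ := mem_posBraid_iff.1 ht0.1
  obtain ⟨t1, rfl⟩ := mem_posBraid_iff.1 ht1.1
  obtain ⟨t2, rfl⟩ := mem_posBraid_iff.1 ht2.1
  simp only [← map_mul] at e1 e2
  rw [gNormal_toBraidGroup_iff] at hn ⊢
  refine ⟨dividesL_braidDelta_iff.1 hs1'.2, fun d hd hdΔ =>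
    dvd_of_tile (dividesL_braidDelta_iff.1 ht2.2) (toBraidGroup_injective e1)
      (toBraidGroup_injective e2) (fun c h₁ h₂ => ?_) hn.2 hd hdΔ⟩
  exact toBraidGroup_injective <| (hgcd _ (toBraidGroup_mem_posBraid c)
    (dividesL_toBraidGroup_iff.2 h₁) (dividesL_toBraidGroup_iff.2 h₂)).trans (map_one _).symm
end

section
/- Simple braids are closed under left lcm and left complement: if s and t are simple n-braids and u = lcm_L(s, t) = s' t = t' s, then u, s', and t' are simple, and moreover gcd_L(s', t') = 1. -/
lemma braidRel_eq_one {n : ℕ} {r : FreeGroup (Fin (n-1))} (h : r ∈ braidRels n) :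
    (PresentedGroup.mk (braidRels n) r : BraidGroup n) = 1 := by
  change (QuotientGroup.mk r : PresentedGroup (braidRels n)) = 1
  rw [QuotientGroup.eq_one_iff]
  exact Subgroup.subset_normalClosure h

lemma braid_comm {n : ℕ} (i j : Fin (n-1)) (h : (i:ℕ) + 2 ≤ (j:ℕ)) :
    braidGen (n := n) i * braidGen j = braidGen j * braidGen i := by
  have := braidRel_eq_one (n := n) (r := FreeGroup.of i * FreeGroup.of j *
    (FreeGroup.of j * FreeGroup.of i)⁻¹) (Or.inl ⟨i, j, h, rfl⟩)
  simp only [map_mul, map_inv] at this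
  exact mul_inv_eq_one.mp this

lemma braid_braid {n : ℕ} (i j : Fin (n-1)) (h : (i:ℕ) + 1 = (j:ℕ)) :
    braidGen (n := n) i * braidGen j * braidGen i
      = braidGen j * braidGen i * braidGen j := by
  have := braidRel_eq_one (n := n) (r := FreeGroup.of i * FreeGroup.of j * FreeGroup.of i *
    (FreeGroup.of j * FreeGroup.of i * FreeGroup.of j)⁻¹) (Or.inr ⟨i, j, h, rfl⟩)
  simp only [map_mul, map_inv] at this
  exact mul_inv_eq_one.mp this

def g (n : ℕ) (i : ℕ) : BraidGroup n := if h : i < n - 1 then braidGen ⟨i, h⟩ else 1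

def del (n k : ℕ) : BraidGroup n := ((List.range k).map (g n)).prod

lemma deltaAux_succ (n m : ℕ) : deltaAux n (m+1) = del n m * deltaAux n m := rfl

lemma del_succ (n k : ℕ) : del n (k+1) = del n k * g n k := by
  simp [del, List.range_succ]

lemma comm_g {n : ℕ} {i j : ℕ} (h : i + 2 ≤ j) : g n i * g n j = g n j * g n i := by
  unfold g
  by_cases hj : j < n - 1
  · have hi : i < n - 1 := by omega
    rw [dif_pos hj, dif_pos hi]
    exact braid_comm ⟨i, hi⟩ ⟨j, hj⟩ h
  · rw [dif_neg hj]; simp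

lemma braid_g {n : ℕ} {i : ℕ} (h : i + 2 ≤ n - 1) :
    g n i * g n (i+1) * g n i = g n (i+1) * g n i * g n (i+1) := by
  unfold g
  have hj : i + 1 < n - 1 := by omega
  have hi : i < n - 1 := by omega
  rw [dif_pos hj, dif_pos hi]
  exact braid_braid ⟨i, hi⟩ ⟨i+1, hj⟩ rfl

lemma del_comm_g {n : ℕ} {k j : ℕ} (h : k + 1 ≤ j) :
    del n k * g n j = g n j * del n k := by
  induction k with
  | zero => simp [del]
  | succ k ih =>
    rw [del_succ, mul_assoc, comm_g (by omega), ← mul_assoc, ih (by omega),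
      mul_assoc]

lemma deltaAux_comm_g {n : ℕ} {m j : ℕ} (h : m ≤ j) :
    deltaAux n m * g n j = g n j * deltaAux n m := by
  induction m with
  | zero => simp [deltaAux]
  | succ m ih =>
    rw [deltaAux_succ, mul_assoc, ih (by omega), ← mul_assoc,
      del_comm_g (by omega), mul_assoc]

lemma del_shift {n : ℕ} {k j : ℕ} (h : j + 2 ≤ k) (hk : k ≤ n - 1) :
    del n k * g n j = g n (j+1) * del n k := by
  induction k with
  | zero => omega
  | succ k ih =>
    rcases Nat.lt_or_ge (j+2) (k+1) with hlt | hge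
    · have h1 : j + 2 ≤ k := by omega
      have h2 : k ≤ n - 1 := by omega
      rw [del_succ, mul_assoc, ← comm_g (n:=n) (i:=j) (j:=k) (by omega), ← mul_assoc,
        ih h1 h2, mul_assoc]
    · have hkj : k = j + 1 := by omega
      subst hkj
      have hb := braid_g (n:=n) (i:=j) (by omega)
      have hc := del_comm_g (n:=n) (k:=j) (j:=j+1) (by omega)
      calc del n (j+1+1) * g n j
          = del n j * (g n j * g n (j+1) * g n j) := by
            rw [del_succ, del_succ]; simp only [mul_assoc]
        _ = del n j * (g n (j+1) * g n j * g n (j+1)) := by rw [hb]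
        _ = del n j * g n (j+1) * (g n j * g n (j+1)) := by simp only [mul_assoc]
        _ = g n (j+1) * del n j * (g n j * g n (j+1)) := by rw [hc]
        _ = g n (j+1) * del n (j+1+1) := by rw [del_succ, del_succ]; simp only [mul_assoc]

lemma del_del {n : ℕ} {k j : ℕ} (h : j + 1 ≤ k) (hk : k ≤ n - 1) :
    del n k * del n j = ((List.range j).map (fun i => g n (i+1))).prod * del n k := by
  induction j with
  | zero => simp [del]
  | succ j ih =>
    have h1 : j + 1 ≤ k := by omega
    rw [del_succ, ← mul_assoc, ih h1, mul_assoc, del_shift (n:=n) (k:=k) (j:=j) (by omega) hk,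
      ← mul_assoc, List.range_succ]
    simp [mul_assoc]

lemma del_eq_g0 {n : ℕ} (j : ℕ) :
    del n (j+1) = g n 0 * ((List.range j).map (fun i => g n (i+1))).prod := by
  rw [del, List.range_succ_eq_map]
  simp only [List.map_cons, List.map_map, List.prod_cons]
  rfl

lemma delta_conj {n : ℕ} : ∀ m, m ≤ n → ∀ i, i + 2 ≤ m →
    deltaAux n m * g n i = g n (m - 2 - i) * deltaAux n m := by
  intro m
  induction m with
  | zero => intro _ i hi; omega
  | succ m ih =>
    intro hmn i hi
    rcases Nat.lt_or_ge i (m - 1) with hlt | hge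
    · have h2 : i + 2 ≤ m := by omega
      have e : m - 2 - i + 1 = m + 1 - 2 - i := by omega
      rw [deltaAux_succ, mul_assoc, ih (by omega) i h2, ← mul_assoc,
        del_shift (n:=n) (k:=m) (j:=m-2-i) (by omega) (by omega), mul_assoc, e,
        ← deltaAux_succ]
    · obtain rfl : m = i + 1 := by omega
      have e : i + 1 + 1 - 2 - i = 0 := by omega
      rw [e]
      have key : del n i * deltaAux n i * g n i = del n (i+1) * deltaAux n i := by
        rw [mul_assoc, deltaAux_comm_g (le_refl i), ← mul_assoc, ← del_succ]
      have hdd : g n 0 * del n (i+1) * del n i = del n (i+1) * del n (i+1) := by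
        rw [mul_assoc, del_del (n:=n) (k:=i+1) (j:=i) (by omega) (by omega),
          ← mul_assoc, ← del_eq_g0]
      simp only [deltaAux_succ]
      rw [mul_assoc (del n (i+1)), key]
      simp only [← mul_assoc]
      rw [hdd]

lemma g_mem_pos {n : ℕ} (i : ℕ) : g n i ∈ PosBraid n := by
  unfold g
  split
  · exact Submonoid.subset_closure ⟨_, rfl⟩
  · exact one_mem _

lemma braidGen_eq_g {n : ℕ} (i : Fin (n-1)) : braidGen i = g n i := by
  unfold g
  rw [dif_pos i.isLt]

lemma delta_g_conj {n : ℕ} {i : ℕ} (h : i + 2 ≤ n) :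
    braidDelta n * g n i = g n (n - 2 - i) * braidDelta n :=
  delta_conj n le_rfl i h

lemma conj_pos_left {n : ℕ} {x : BraidGroup n} (hx : x ∈ PosBraid n) :
    braidDelta n * x * (braidDelta n)⁻¹ ∈ PosBraid n := by
  induction hx using Submonoid.closure_induction with
  | mem y hy =>
    obtain ⟨i, rfl⟩ := hy
    have hi : (i : ℕ) + 2 ≤ n := by have := i.isLt; omega
    rw [braidGen_eq_g, delta_g_conj hi, mul_inv_cancel_right]
    exact g_mem_pos _
  | one => simpa using one_mem _
  | mul a b _ _ ha hb =>
    have : braidDelta n * (a * b) * (braidDelta n)⁻¹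
        = (braidDelta n * a * (braidDelta n)⁻¹) * (braidDelta n * b * (braidDelta n)⁻¹) := by
      group
    rw [this]; exact mul_mem ha hb

lemma conj_pos_right {n : ℕ} {x : BraidGroup n} (hx : x ∈ PosBraid n) :
    (braidDelta n)⁻¹ * x * braidDelta n ∈ PosBraid n := by
  induction hx using Submonoid.closure_induction with
  | mem y hy =>
    obtain ⟨i, rfl⟩ := hy
    have hin : (i : ℕ) < n - 1 := i.isLt
    have h1 : (n - 2 - (i:ℕ)) + 2 ≤ n := by omega
    have h2 : n - 2 - (n - 2 - (i:ℕ)) = i := by omega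
    have := delta_g_conj (n := n) h1
    rw [h2, ← braidGen_eq_g] at this
    rw [mul_assoc, ← this, ← mul_assoc]
    simpa using g_mem_pos (n := n) (n - 2 - (i:ℕ))
  | one => simpa using one_mem _
  | mul a b _ _ ha hb =>
    have : (braidDelta n)⁻¹ * (a * b) * braidDelta n
        = ((braidDelta n)⁻¹ * a * braidDelta n) * ((braidDelta n)⁻¹ * b * braidDelta n) := by
      group
    rw [this]; exact mul_mem ha hb

def lenHom (n : ℕ) : BraidGroup n →* Multiplicative ℤ :=
  PresentedGroup.toGroup (f := fun _ : Fin (n-1) => Multiplicative.ofAdd (1:ℤ))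
    (by rintro r (⟨i, j, hij, rfl⟩ | ⟨i, j, hij, rfl⟩) <;> simp <;> group)

lemma lenHom_gen {n : ℕ} (i : Fin (n-1)) :
    lenHom n (braidGen i) = Multiplicative.ofAdd (1:ℤ) :=
  PresentedGroup.toGroup.of _

lemma pos_len_nonneg {n : ℕ} {x : BraidGroup n} (hx : x ∈ PosBraid n) :
    0 ≤ (lenHom n x).toAdd := by
  induction hx using Submonoid.closure_induction with
  | mem y hy => obtain ⟨i, rfl⟩ := hy; rw [lenHom_gen]; simp
  | one => simp
  | mul a b _ _ ha hb => rw [map_mul]; simpa using add_nonneg ha hb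

lemma pos_len_one {n : ℕ} {x : BraidGroup n} (hx : x ∈ PosBraid n)
    (h : lenHom n x = 1) : x = 1 := by
  induction hx using Submonoid.closure_induction with
  | mem y hy =>
    obtain ⟨i, rfl⟩ := hy
    rw [lenHom_gen] at h
    exact absurd (congrArg Multiplicative.toAdd h) (by simp)
  | one => rfl
  | mul a b hpa hpb ha hb =>
    rw [map_mul] at h
    have h1 := pos_len_nonneg hpa
    have h2 := pos_len_nonneg hpb
    have hsum : (lenHom n a).toAdd + (lenHom n b).toAdd = 0 := by
      have := congrArg Multiplicative.toAdd h
      simpa using this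
    have ea : lenHom n a = 1 := by
      have : (lenHom n a).toAdd = 0 := by omega
      simpa using congrArg Multiplicative.ofAdd this
    have eb : lenHom n b = 1 := by
      have : (lenHom n b).toAdd = 0 := by omega
      simpa using congrArg Multiplicative.ofAdd this
    rw [ha ea, hb eb, one_mul]

lemma dividesR_delta_of_dividesL {n : ℕ} {s : BraidGroup n}
    (h : DividesL s (braidDelta n)) : DividesR s (braidDelta n) := by
  obtain ⟨z, hz, he⟩ := h
  refine ⟨braidDelta n * z * (braidDelta n)⁻¹, conj_pos_left hz, ?_⟩
  rw [he]; group

lemma dividesL_delta_of_dividesR {n : ℕ} {s : BraidGroup n}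
    (h : DividesR s (braidDelta n)) : DividesL s (braidDelta n) := by
  obtain ⟨z, hz, he⟩ := h
  refine ⟨(braidDelta n)⁻¹ * z * braidDelta n, conj_pos_right hz, ?_⟩
  rw [he]; group

/-- Simple braids are closed under left lcm and left complement: if `s, t` are
simple and `u = lcm_L(s, t) = s' t = t' s`, then `u, s', t'` are simple and
`gcd_L(s', t') = 1`. -/
theorem simple_closed_under_lcm (n : ℕ) (s t u s' t' : BraidGroup n)
    (hs : Simple s) (ht : Simple t)
    (hs' : s' ∈ PosBraid n) (ht' : t' ∈ PosBraid n)
    (hu : IsLeftLcm u s t) (e1 : u = s' * t) (e2 : u = t' * s) :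
    Simple u ∧ Simple s' ∧ Simple t' ∧
      ∀ d ∈ PosBraid n, DividesL d s' → DividesL d t' → d = 1 := by
  have hds : DividesR s (braidDelta n) := dividesR_delta_of_dividesL hs.2
  have hdt : DividesR t (braidDelta n) := dividesR_delta_of_dividesL ht.2
  have hdu : DividesR u (braidDelta n) := hu.2.2 _ hds hdt
  have hu_pos : u ∈ PosBraid n := e1 ▸ mul_mem hs' ht.1
  have hul : DividesL u (braidDelta n) := dividesL_delta_of_dividesR hdu
  obtain ⟨w, hw, hΔ⟩ := hul
  refine ⟨⟨hu_pos, w, hw, hΔ⟩, ⟨hs', t * w, mul_mem ht.1 hw, ?_⟩,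
    ⟨ht', s * w, mul_mem hs.1 hw, ?_⟩, ?_⟩
  · rw [hΔ, e1]; group
  · rw [hΔ, e2]; group
  · intro d hd hda hdb
    obtain ⟨a, ha, hsa⟩ := hda
    obtain ⟨b, hb, htb⟩ := hdb
    have hv1 : u = d * (a * t) := by rw [e1, hsa]; group
    have hv2 : u = d * (b * s) := by rw [e2, htb]; group
    have hab : a * t = b * s := mul_left_cancel (hv1.symm.trans hv2)
    obtain ⟨c, hc, hvc⟩ := hu.2.2 (a * t) ⟨b, hb, hab⟩ ⟨a, ha, rfl⟩
    have hdc : d * c = 1 := by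
      have h3 : (d * c) * u = 1 * u := by
        rw [one_mul]
        conv_rhs => rw [hv1, hvc]
        group
      exact mul_right_cancel h3
    have h1 := pos_len_nonneg hd
    have h2 := pos_len_nonneg hc
    have hsum : (lenHom n d).toAdd + (lenHom n c).toAdd = 0 := by
      have := congrArg (lenHom n) hdc
      rw [map_mul, map_one] at this
      simpa using congrArg Multiplicative.toAdd this
    apply pos_len_one hd
    have : (lenHom n d).toAdd = 0 := by omega
    simpa using congrArg Multiplicative.ofAdd this
end
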